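/- arXiv:2409.15059 — 3 statements merged into one kernel-verified Lean document; each statement's English description precedes it below -/
import Mathlib

section
/- Let Λ⁰₊ ⊆ [0,1]^d be open in the subspace topology of [0,1]^d, let Λ↑₊ = (Λ⁰₊)⁺, and let B = {α ∈ [n]^d : Sq(α)° ∩ ∂Λ⁰₊ ≠ ∅}, where ∂Λ⁰₊ is the boundary of Λ⁰₊ in [0,1]^d. Then B = {α ∈ [n]^d : Sq(α)° ∩ (Λ↑₊ △ Λ⁰₊) ≠ ∅}, where △ denotes symmetric difference of sets. -/
open MeasureTheory

noncomputable section

/-- The unit cube `[0,1]^d` as a subset of `Fin d → ℝ`. -/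
def unitCube (d : ℕ) : Set (Fin d → ℝ) := Set.univ.pi fun _ => Set.Icc (0 : ℝ) 1

/-- The closed grid hypercube of edge length `δ = 1/n` indexed by `α ∈ [n]^d`. -/
def Sq (n : ℕ) {d : ℕ} (α : Fin d → Fin n) : Set (Fin d → ℝ) :=
  Set.univ.pi fun i => Set.Icc ((α i : ℝ) / n) (((α i : ℝ) + 1) / n)

/-- `C⁺`: the union of all grid hypercubes whose interior (in `ℝ^d`) meets `C`. -/
def tilePlus (d n : ℕ) (C : Set (Fin d → ℝ)) : Set (Fin d → ℝ) :=
  ⋃ α ∈ {α : Fin d → Fin n | (interior (Sq n α) ∩ C).Nonempty}, Sq n α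

/-- `A` is open in the subspace topology of `s`. -/
def isOpenIn {X : Type*} [TopologicalSpace X] (s A : Set X) : Prop :=
  IsOpen {x : s | (x : X) ∈ A}

/-- The boundary of `A` in the subspace topology of `s`, as a subset of `X`. -/
def bdryIn {X : Type*} [TopologicalSpace X] (s A : Set X) : Set X :=
  Subtype.val '' frontier {x : s | (x : X) ∈ A}

section Helpers

variable {d n : ℕ}

lemma interior_Sq (α : Fin d → Fin n) :
    interior (Sq n α) = Set.univ.pi fun i => Set.Ioo ((α i : ℝ) / n) (((α i : ℝ) + 1) / n) := by
  rw [Sq, interior_pi_set Set.finite_univ]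
  simp

lemma Sq_subset_unitCube (hn : 1 ≤ n) (α : Fin d → Fin n) : Sq n α ⊆ unitCube d := by
  intro x hx i _
  have hxi := hx i (Set.mem_univ i)
  have h0 : (0:ℝ) < n := by exact_mod_cast hn
  constructor
  · have h1 : (0:ℝ) ≤ (α i : ℝ) / n := by positivity
    linarith [hxi.1]
  · have h1 : ((α i : ℝ) + 1) ≤ n := by exact_mod_cast (α i).isLt
    have h2 : ((α i : ℝ) + 1) / n ≤ 1 := by rw [div_le_one h0]; exact h1
    linarith [hxi.2]

lemma convex_Sq (α : Fin d → Fin n) : Convex ℝ (Sq n α) :=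
  convex_pi fun i _ => convex_Icc _ _

/-- The center of a tile lies in its interior. -/
lemma center_mem_interior_Sq (hn : 1 ≤ n) (α : Fin d → Fin n) :
    (fun i => ((α i : ℝ) + 2⁻¹) / n) ∈ interior (Sq n α) := by
  rw [interior_Sq]
  intro i _
  have h0 : (0:ℝ) < n := by exact_mod_cast hn
  constructor
  · exact (div_lt_div_iff_of_pos_right h0).mpr (by norm_num)
  · exact (div_lt_div_iff_of_pos_right h0).mpr (by norm_num)

/-- Rigidity: a point in the interior of one tile lies in no other tile. -/
lemma tile_eq (hn : 1 ≤ n) {α β : Fin d → Fin n} {z : Fin d → ℝ}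
    (h1 : z ∈ interior (Sq n α)) (h2 : z ∈ Sq n β) : β = α := by
  rw [interior_Sq] at h1
  funext i
  have h0 : (0:ℝ) < n := by exact_mod_cast hn
  have ha := h1 i (Set.mem_univ i)
  have hb := h2 i (Set.mem_univ i)
  have e1 : (β i : ℝ) < (α i : ℝ) + 1 :=
    (div_lt_div_iff_of_pos_right h0).mp (lt_of_le_of_lt hb.1 ha.2)
  have e2 : (α i : ℝ) < (β i : ℝ) + 1 :=
    (div_lt_div_iff_of_pos_right h0).mp (lt_of_lt_of_le ha.1 hb.2)
  have n1 : (β i : ℕ) < (α i : ℕ) + 1 := by exact_mod_cast e1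
  have n2 : (α i : ℕ) < (β i : ℕ) + 1 := by exact_mod_cast e2
  exact Fin.ext (by omega)

/-- Every point of an open-in-cube set lies in `tilePlus` of that set. -/
lemma subset_tilePlus (hn : 1 ≤ n) {Λ V : Set (Fin d → ℝ)} (hVopen : IsOpen V)
    (hV : V ∩ unitCube d = Λ) : Λ ⊆ tilePlus d n Λ := by
  intro x hx
  have hx' : x ∈ V ∩ unitCube d := hV ▸ hx
  have hxV : x ∈ V := hx'.1
  have hxc : x ∈ unitCube d := hx'.2
  have h0 : (0:ℝ) < n := by exact_mod_cast hn
  set β : Fin d → Fin n := fun i => ⟨min (Nat.floor ((n:ℝ) * x i)) (n-1), by omega⟩ with hβ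
  have hxSq : x ∈ Sq n β := by
    intro i _
    have hx0 : 0 ≤ x i := (hxc i (Set.mem_univ i)).1
    have hx1 : x i ≤ 1 := (hxc i (Set.mem_univ i)).2
    constructor
    · rw [div_le_iff₀ h0]
      have hfl : ((Nat.floor ((n:ℝ) * x i)):ℝ) ≤ (n:ℝ) * x i := Nat.floor_le (by positivity)
      have hmin : ((β i : ℕ):ℝ) ≤ ((Nat.floor ((n:ℝ) * x i)):ℝ) := by
        exact_mod_cast min_le_left _ _
      linarith
    · rw [le_div_iff₀ h0]
      rcases le_or_gt (Nat.floor ((n:ℝ) * x i)) (n-1) with h | h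
      · have hbi : (β i : ℕ) = Nat.floor ((n:ℝ) * x i) := min_eq_left h
        have := Nat.lt_floor_add_one ((n:ℝ) * x i)
        rw [hbi]
        push_cast
        linarith [this]
      · have hbi : (β i : ℕ) = n - 1 := min_eq_right h.le
        have hcast : ((β i : ℕ):ℝ) + 1 = n := by
          rw [hbi]
          have : ((n-1 : ℕ):ℝ) = (n:ℝ) - 1 := by
            have : (1:ℕ) ≤ n := hn
            push_cast [this]
            ring
          rw [this]; ring
        rw [hcast]
        nlinarith
  -- perturb `x` towards the center to find an interior point of `Sq n β` inside `Λ`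
  have hcmem := center_mem_interior_Sq (d := d) hn β
  have htend : Filter.Tendsto (fun θ : ℝ => θ • (fun i => ((β i : ℝ) + 2⁻¹) / n) + (1-θ) • x)
      (nhds 0) (nhds x) := by
    have hc : Continuous fun θ : ℝ =>
        θ • (fun i => ((β i : ℝ) + 2⁻¹) / n) + (1-θ) • x := by continuity
    have h := hc.tendsto 0
    simpa using h
  have hev : ∀ᶠ θ in nhdsWithin 0 (Set.Ioi (0:ℝ)),
      (θ • (fun i => ((β i : ℝ) + 2⁻¹) / n) + (1-θ) • x) ∈ V :=
    (htend.mono_left nhdsWithin_le_nhds).eventually (hVopen.mem_nhds hxV)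
  have hev2 : ∀ᶠ θ in nhdsWithin 0 (Set.Ioi (0:ℝ)), θ ∈ Set.Ioo (0:ℝ) 1 :=
    Ioo_mem_nhdsGT_of_mem ⟨le_refl _, one_pos⟩
  obtain ⟨θ, hθV, hθI⟩ := (hev.and hev2).exists
  set z := θ • (fun i => ((β i : ℝ) + 2⁻¹) / n) + (1-θ) • x with hz
  have hzint : z ∈ interior (Sq n β) :=
    (convex_Sq β).combo_interior_self_mem_interior hcmem hxSq hθI.1 (by linarith [hθI.2])
      (by ring)
  have hzΛ : z ∈ Λ := by
    rw [← hV]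
    exact ⟨hθV, Sq_subset_unitCube hn β (interior_subset hzint)⟩
  exact Set.mem_biUnion (show β ∈ {γ : Fin d → Fin n | (interior (Sq n γ) ∩ Λ).Nonempty}
    from ⟨z, hzint, hzΛ⟩) hxSq

/-- On an open set contained in `s`, the subspace boundary agrees with the ambient frontier. -/
lemma bdryIn_eq_frontier_on_open {X : Type*} [TopologicalSpace X] {s A V : Set X}
    (hA : A ⊆ s) (hV : IsOpen V) (hVs : V ⊆ s) {x : X} (hx : x ∈ V) :
    x ∈ bdryIn s A ↔ x ∈ frontier A := by
  rw [frontier_eq_closure_inter_closure]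
  constructor
  · rintro ⟨p, hp, rfl⟩
    rw [frontier_eq_closure_inter_closure] at hp
    obtain ⟨h1, h2⟩ := hp
    rw [closure_subtype] at h1 h2
    refine ⟨closure_mono ?_ h1, closure_mono ?_ h2⟩ <;> rintro y ⟨q, hq, rfl⟩
    · exact hq
    · exact hq
  · rintro ⟨h1, h2⟩
    refine ⟨⟨x, hVs hx⟩, ?_, rfl⟩
    rw [frontier_eq_closure_inter_closure]
    constructor
    · rw [closure_subtype]
      refine closure_mono ?_ (hV.inter_closure ⟨hx, h1⟩)
      rintro y ⟨hyV, hyA⟩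
      exact ⟨⟨y, hVs hyV⟩, hyA, rfl⟩
    · rw [closure_subtype]
      refine closure_mono ?_ (hV.inter_closure ⟨hx, h2⟩)
      rintro y ⟨hyV, hyA⟩
      exact ⟨⟨y, hVs hyV⟩, hyA, rfl⟩

/-- A preconnected set meeting both `t` and its complement meets the frontier of `t`. -/
lemma preconn_inter_frontier {X : Type*} [TopologicalSpace X] {S t : Set X}
    (hS : IsPreconnected S) (h1 : (S ∩ t).Nonempty) (h2 : (S \ t).Nonempty) :
    (S ∩ frontier t).Nonempty := by
  by_contra h
  rw [Set.not_nonempty_iff_eq_empty] at h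
  have hsub : S ⊆ interior t ∪ (closure t)ᶜ := by
    intro y hy
    by_cases hyc : y ∈ closure t
    · by_cases hyi : y ∈ interior t
      · exact Or.inl hyi
      · have hyf : y ∈ frontier t := ⟨hyc, hyi⟩
        exact absurd (Set.mem_inter hy hyf) (by rw [h]; exact Set.notMem_empty y)
    · exact Or.inr hyc
  obtain ⟨p, hpS, hpt⟩ := h1
  have hp : p ∈ interior t :=
    (hsub hpS).resolve_right fun hc => hc (subset_closure hpt)
  obtain ⟨q, hqS, hqt⟩ := h2
  have hq : q ∈ (closure t)ᶜ :=
    (hsub hqS).resolve_left fun hc => hqt (interior_subset hc)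
  obtain ⟨y, _, hy1, hy2⟩ := hS _ _ isOpen_interior isClosed_closure.isOpen_compl hsub
    ⟨p, hpS, hp⟩ ⟨q, hqS, hq⟩
  exact hy2 (subset_closure (interior_subset hy1))

end Helpers

/-- the set of boundary tiles `B` equals the set of tiles whose interiors
meet the symmetric difference `Λ↑₊ △ Λ⁰₊`. -/
theorem stmt1 (d n : ℕ) (hd : 2 ≤ d) (hn : 1 ≤ n)
    (Λ : Set (Fin d → ℝ)) (hsub : Λ ⊆ unitCube d)
    (hopen : isOpenIn (unitCube d) Λ) :
    {α : Fin d → Fin n | (interior (Sq n α) ∩ bdryIn (unitCube d) Λ).Nonempty}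
      = {α : Fin d → Fin n |
          (interior (Sq n α) ∩ symmDiff (tilePlus d n Λ) Λ).Nonempty} := by
  obtain ⟨V, hVopen, hVpre⟩ := isOpen_induced_iff.mp hopen
  have hVcube : V ∩ unitCube d = Λ := by
    have himg := congrArg (Set.image (Subtype.val : unitCube d → (Fin d → ℝ))) hVpre
    rw [show (Subtype.val : unitCube d → (Fin d → ℝ)) '' (Subtype.val ⁻¹' V)
          = unitCube d ∩ V from Subtype.image_preimage_coe _ _,
        show (Subtype.val : unitCube d → (Fin d → ℝ)) '' {x : unitCube d | (x : Fin d → ℝ) ∈ Λ}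
          = unitCube d ∩ Λ from Subtype.image_preimage_coe _ _] at himg
    rw [Set.inter_comm, himg, Set.inter_eq_self_of_subset_right hsub]
  have hsubplus : Λ ⊆ tilePlus d n Λ := subset_tilePlus hn hVopen hVcube
  ext α
  simp only [Set.mem_setOf_eq]
  have hopenint : IsOpen (interior (Sq n α)) := isOpen_interior
  have hintsub : interior (Sq n α) ⊆ unitCube d :=
    interior_subset.trans (Sq_subset_unitCube hn α)
  constructor
  · rintro ⟨x, hxint, hxbd⟩
    have hxfr : x ∈ frontier Λ :=
      (bdryIn_eq_frontier_on_open hsub hopenint hintsub hxint).mp hxbd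
    obtain ⟨p, hpint, hpΛ⟩ : (interior (Sq n α) ∩ Λ).Nonempty := by
      have hcl := hxfr.1
      rw [mem_closure_iff] at hcl
      exact hcl _ hopenint hxint
    have hxplus : x ∈ tilePlus d n Λ :=
      Set.mem_biUnion (show α ∈ {γ : Fin d → Fin n | (interior (Sq n γ) ∩ Λ).Nonempty}
        from ⟨p, hpint, hpΛ⟩) (interior_subset hxint)
    have hxnΛ : x ∉ Λ := by
      intro hxΛ
      have hxV : x ∈ V := by rw [← hVcube] at hxΛ; exact hxΛ.1
      have hxi : x ∈ interior Λ := by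
        refine mem_interior.mpr ⟨V ∩ interior (Sq n α), ?_, hVopen.inter hopenint, hxV, hxint⟩
        rintro y ⟨hyV, hyint⟩
        rw [← hVcube]
        exact ⟨hyV, hintsub hyint⟩
      exact hxfr.2 hxi
    exact ⟨x, hxint, Set.mem_symmDiff.mpr (Or.inl ⟨hxplus, hxnΛ⟩)⟩
  · rintro ⟨x, hxint, hxsd⟩
    rcases Set.mem_symmDiff.mp hxsd with ⟨hxplus, hxnΛ⟩ | ⟨hxΛ, hxnplus⟩
    · obtain ⟨β, hβ, hxβ⟩ := Set.mem_iUnion₂.mp hxplus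
      have hβα : β = α := tile_eq hn hxint hxβ
      rw [hβα] at hβ
      obtain ⟨p, hpint, hpΛ⟩ := hβ
      have hconn : IsPreconnected (interior (Sq n α)) :=
        ((convex_Sq α).interior).isPreconnected
      obtain ⟨z, hzint, hzfr⟩ := preconn_inter_frontier hconn ⟨p, hpint, hpΛ⟩
        ⟨x, hxint, hxnΛ⟩
      exact ⟨z, hzint, (bdryIn_eq_frontier_on_open hsub hopenint hintsub hzint).mpr hzfr⟩
    · exact absurd (hsubplus hxΛ) hxnplus
end
end

section
/- Let A be a finite set partitioned into four pairwise disjoint subsets A_{++}, A_{+−}, A_{−+}, A_{−−}, write A₊• = A_{++} ∪ A_{+−} and A₋• = A_{−+} ∪ A_{−−}, and assume A₊• ≠ ∅ and A₋• ≠ ∅. Let I : A → (0,∞) and M : A → ℝ, let θ⁰₊, θ⁰₋ ∈ ℝ, set η = θ⁰₊ − θ⁰₋, and define θ̂₊ = (θ⁰₊ Σ_{A_{++}} I_α + θ⁰₋ Σ_{A_{+−}} I_α + Σ_{A₊•} M_α)/Σ_{A₊•} I_α and θ̂₋ = (θ⁰₊ Σ_{A_{−+}} I_α + θ⁰₋ Σ_{A_{−−}}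 I_α + Σ_{A₋•} M_α)/Σ_{A₋•} I_α. Then (1/2)[Σ_{A_{++}}(θ̂₊−θ⁰₊)² I_α + Σ_{A_{+−}}(θ̂₊−θ⁰₋)² I_α + Σ_{A_{−−}}(θ̂₋−θ⁰₋)² I_α + Σ_{A_{−+}}(θ̂₋−θ⁰₊)² I_α] − [Σ_{A_{++}}(θ̂₊−θ⁰₊) M_α + Σ_{A_{+−}}(θ̂₊−θ⁰₋) M_α + Σ_{A_{−−}}(θ̂₋−θ⁰₋) M_α + Σ_{A_{−+}}(θ̂₋−θ⁰₊) M_α] equals (η²/2)(Σ_{A_{++}} I_α)(Σ_{A_{+−}} I_α)/Σ_{A₊•} I_α + (η²/2)(Σ_{A_{−−}} I_α)(Σ_{A_{−+}} I_α)/Σ_{A₋•} I_α − (Σ_{A₊•} M_α)²/(2Σ_{A₊•} I_α) − (Σ_{A₋•} M_α)²/(2Σ_{A₋•} I_α) − η(Σ_{A_{+−}} M_α · Σ_{A_{++}} I_α − Σ_{A_{++}} M_α · Σ_{A_{+−}} I_α)/Σ_{A₊•} I_α − η(Σ_{A_{−+}} I_α · Σ_{A_{−−}} M_α − Σ_{A_{−−}}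 I_α · Σ_{A_{−+}} M_α)/Σ_{A₋•} I_α. -/
/-- the algebraic identity (eq:Z_split) for the empirical process
evaluated at the domain-specific diffusivity estimators, for a finite index set
partitioned into `A_{++}, A_{+−}, A_{−+}, A_{−−}`. -/
theorem stmt7 {ι : Type*} [DecidableEq ι] (A App Apm Amp Amm : Finset ι)
    (h12 : Disjoint App Apm) (h13 : Disjoint App Amp) (h14 : Disjoint App Amm)
    (h23 : Disjoint Apm Amp) (h24 : Disjoint Apm Amm) (h34 : Disjoint Amp Amm)
    (hunion : App ∪ Apm ∪ Amp ∪ Amm = A)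
    (hp : (App ∪ Apm).Nonempty) (hm : (Amp ∪ Amm).Nonempty)
    (I M : ι → ℝ) (hI : ∀ α ∈ A, 0 < I α) (θ0p θ0m η θhp θhm : ℝ)
    (hη : η = θ0p - θ0m)
    (hθp : θhp = (θ0p * ∑ α ∈ App, I α + θ0m * ∑ α ∈ Apm, I α
                    + ∑ α ∈ App ∪ Apm, M α) / ∑ α ∈ App ∪ Apm, I α)
    (hθm : θhm = (θ0p * ∑ α ∈ Amp, I α + θ0m * ∑ α ∈ Amm, I α
                    + ∑ α ∈ Amp ∪ Amm, M α) / ∑ α ∈ Amp ∪ Amm, I α) :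
    (1 / 2) * (∑ α ∈ App, (θhp - θ0p) ^ 2 * I α + ∑ α ∈ Apm, (θhp - θ0m) ^ 2 * I α
        + ∑ α ∈ Amm, (θhm - θ0m) ^ 2 * I α + ∑ α ∈ Amp, (θhm - θ0p) ^ 2 * I α)
      - (∑ α ∈ App, (θhp - θ0p) * M α + ∑ α ∈ Apm, (θhp - θ0m) * M α
        + ∑ α ∈ Amm, (θhm - θ0m) * M α + ∑ α ∈ Amp, (θhm - θ0p) * M α)
      = (η ^ 2 / 2) * ((∑ α ∈ App, I α) * (∑ α ∈ Apm, I α)) / ∑ α ∈ App ∪ Apm, I α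
        + (η ^ 2 / 2) * ((∑ α ∈ Amm, I α) * (∑ α ∈ Amp, I α)) / ∑ α ∈ Amp ∪ Amm, I α
        - (∑ α ∈ App ∪ Apm, M α) ^ 2 / (2 * ∑ α ∈ App ∪ Apm, I α)
        - (∑ α ∈ Amp ∪ Amm, M α) ^ 2 / (2 * ∑ α ∈ Amp ∪ Amm, I α)
        - η * ((∑ α ∈ Apm, M α) * (∑ α ∈ App, I α)
              - (∑ α ∈ App, M α) * (∑ α ∈ Apm, I α)) / ∑ α ∈ App ∪ Apm, I α
        - η * ((∑ α ∈ Amp, I α) * (∑ α ∈ Amm, M α)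
              - (∑ α ∈ Amm, I α) * (∑ α ∈ Amp, M α)) / ∑ α ∈ Amp ∪ Amm, I α := by
  subst hunion
  have hsub1 : App ∪ Apm ⊆ App ∪ Apm ∪ Amp ∪ Amm := by
    intro x hx; simp only [Finset.mem_union] at hx ⊢; tauto
  have hsub2 : Amp ∪ Amm ⊆ App ∪ Apm ∪ Amp ∪ Amm := by
    intro x hx; simp only [Finset.mem_union] at hx ⊢; tauto
  have hSp : 0 < ∑ α ∈ App ∪ Apm, I α :=
    Finset.sum_pos (fun α hα => hI α (hsub1 hα)) hp
  have hSm : 0 < ∑ α ∈ Amp ∪ Amm, I α :=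
    Finset.sum_pos (fun α hα => hI α (hsub2 hα)) hm
  have hSp' : (∑ α ∈ App ∪ Apm, I α) ≠ 0 := ne_of_gt hSp
  have hSm' : (∑ α ∈ Amp ∪ Amm, I α) ≠ 0 := ne_of_gt hSm
  rw [Finset.sum_union h12, Finset.sum_union h12, Finset.sum_union h34,
    Finset.sum_union h34] at *
  simp only [← Finset.mul_sum]
  subst hη hθp hθm
  field_simp
  ring
end

section
/- Let A, B ∈ P with ∅ ≠ A ≠ [0,1]^d, let κ ∈ (0, 1/2] satisfy κ ≤ λ(B) ≤ 1 − κ and δ^d ≤ κ/2, and suppose λ(A △ B) ≥ δ^d and λ(A ∪ B) ≤ 1 − δ^d. Then, writing Aᶜ = [0,1]^d \ A and Bᶜ = [0,1]^d \ B, it holds that λ(A\B)·λ(A∩B)/λ(A) + λ(B\A)·λ(Aᶜ∩Bᶜ)/λ(Aᶜ) ≥ δ^d · κ/2. -/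
open MeasureTheory

noncomputable section

/-- The family `P` of tiling sets: all unions of grid hypercubes. -/
def tilings (d n : ℕ) : Set (Set (Fin d → ℝ)) :=
  {C | ∃ S : Set (Fin d → Fin n), C = ⋃ α ∈ S, Sq n α}

lemma tilings_measurable {d n : ℕ} {C : Set (Fin d → ℝ)} (h : C ∈ tilings d n) :
    MeasurableSet C := by
  obtain ⟨S, rfl⟩ := h
  exact MeasurableSet.biUnion S.to_countable fun α _ =>
    MeasurableSet.univ_pi fun i => measurableSet_Icc

lemma tilings_subset {d n : ℕ} (hn : 1 ≤ n) {C : Set (Fin d → ℝ)} (h : C ∈ tilings d n) :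
    C ⊆ unitCube d := by
  obtain ⟨S, rfl⟩ := h
  refine Set.iUnion₂_subset fun α _ x hx i _ => ?_
  have hxi := hx i (Set.mem_univ i)
  have hn0 : (0:ℝ) < n := by exact_mod_cast hn
  have h1 : (0:ℝ) ≤ (α i : ℝ) / n := by positivity
  have h2 : ((α i : ℝ) + 1) / n ≤ 1 := by
    rw [div_le_one hn0]
    have := (α i).isLt
    have : ((α i : ℝ) + 1) ≤ n := by exact_mod_cast Nat.succ_le_of_lt this
    linarith
  exact ⟨le_trans h1 hxi.1, le_trans hxi.2 h2⟩

lemma volume_unitCube (d : ℕ) : volume (unitCube d) = 1 := by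
  simp [unitCube, Real.volume_Icc_pi]

lemma stmt9_key (a b i c ε κ : ℝ) (ha : 0 ≤ a) (hb : 0 ≤ b) (hi : 0 ≤ i)
    (hε : 0 < ε) (hεκ : ε ≤ κ / 2)
    (hvA : a + i ≤ 1)
    (hab : ε ≤ a + b)
    (hB1 : κ ≤ i + b)
    (hB2 : i + b ≤ 1 - κ)
    (hc : ε ≤ c)
    (hc' : c = 1 - a - i - b) :
    ε * κ / 2 ≤ a * i / (a + i) + b * c / (1 - a - i) := by
  have hκ : 0 < κ := by linarith
  have hvAc : 0 < 1 - a - i := by nlinarith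
  rcases le_or_gt (κ / 2) b with hbig | hsmall
  · have h2 : ε * κ / 2 ≤ b * c / (1 - a - i) := by
      rw [le_div_iff₀ hvAc]
      have hbc : κ / 2 * ε ≤ b * c := mul_le_mul hbig hc hε.le (by linarith)
      nlinarith [mul_nonneg (mul_nonneg hε.le hκ.le) (by linarith : (0:ℝ) ≤ a + i)]
    have h1 : 0 ≤ a * i / (a + i) := div_nonneg (mul_nonneg ha hi) (by linarith)
    linarith
  · have hi2 : κ / 2 ≤ i := by linarith
    have hvA0 : 0 < a + i := by linarith
    have hT1 : a * (κ / 2) ≤ a * i / (a + i) := by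
      rw [le_div_iff₀ hvA0]
      have h1 : a * (κ / 2) ≤ a * i := mul_le_mul_of_nonneg_left hi2 ha
      nlinarith [mul_nonneg ha hi]
    have hT2 : b * c ≤ b * c / (1 - a - i) := by
      rw [le_div_iff₀ hvAc]
      nlinarith [mul_nonneg hb (hε.le.trans hc)]
    have hca : κ - a ≤ c := by linarith
    rcases le_or_gt ε a with haε | haε
    · have : ε * κ / 2 ≤ a * (κ / 2) := by nlinarith
      have hbc : 0 ≤ b * c := mul_nonneg hb (hε.le.trans hc)
      linarith
    · have hba : ε - a ≤ b := by linarith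
      have hbc : (ε - a) * (κ - a) ≤ b * c := by
        have h1 : (0:ℝ) ≤ ε - a := by linarith
        have h2 : (0:ℝ) ≤ κ - a := by linarith
        exact mul_le_mul hba hca h2 (by linarith)
      have : ε * κ / 2 ≤ a * (κ / 2) + b * c := by
        nlinarith [mul_nonneg (by linarith : (0:ℝ) ≤ ε - a) (by linarith : (0:ℝ) ≤ κ/2 - a)]
      linarith

/-- implication (eq:lower). For tiling sets `A, B ∈ P` with
`∅ ≠ A ≠ [0,1]^d`, `κ ≤ λ(B) ≤ 1−κ`, `δ^d ≤ κ/2`, `λ(A△B) ≥ δ^d` and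
`λ(A∪B) ≤ 1−δ^d`, the localization functional is at least `δ^d κ/2`. -/
theorem stmt9 (d n : ℕ) (hd : 2 ≤ d) (hn : 1 ≤ n)
    (A B : Set (Fin d → ℝ)) (hA : A ∈ tilings d n) (hB : B ∈ tilings d n)
    (hAne : A.Nonempty) (hAne' : A ≠ unitCube d)
    (κ : ℝ) (hκ0 : 0 < κ) (hκhalf : κ ≤ 1 / 2)
    (hκB : κ ≤ (volume B).toReal) (hκB' : (volume B).toReal ≤ 1 - κ)
    (hδκ : (1 / (n : ℝ)) ^ d ≤ κ / 2)
    (hsd : (1 / (n : ℝ)) ^ d ≤ (volume (symmDiff A B)).toReal)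
    (hun : (volume (A ∪ B)).toReal ≤ 1 - (1 / (n : ℝ)) ^ d) :
    (1 / (n : ℝ)) ^ d * κ / 2
      ≤ (volume (A \ B)).toReal * (volume (A ∩ B)).toReal / (volume A).toReal
        + (volume (B \ A)).toReal *
            (volume ((unitCube d \ A) ∩ (unitCube d \ B))).toReal
              / (volume (unitCube d \ A)).toReal := by
  have hAm := tilings_measurable hA
  have hBm := tilings_measurable hB
  have hAc := tilings_subset hn hA
  have hBc := tilings_subset hn hB
  have hcube := volume_unitCube d
  have hn0 : (0:ℝ) < n := by exact_mod_cast hn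
  have hε : (0:ℝ) < (1 / (n : ℝ)) ^ d := by positivity
  have hfin : ∀ s : Set (Fin d → ℝ), s ⊆ unitCube d → volume s ≠ ⊤ := fun s hs =>
    ne_top_of_le_ne_top (by simp [hcube]) (hcube ▸ measure_mono hs)
  have finAB : volume (A ∩ B) ≠ ⊤ := hfin _ (Set.inter_subset_left.trans hAc)
  have finAdB : volume (A \ B) ≠ ⊤ := hfin _ (Set.diff_subset.trans hAc)
  have finBdA : volume (B \ A) ≠ ⊤ := hfin _ (Set.diff_subset.trans hBc)
  have finB : volume B ≠ ⊤ := hfin _ hBc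
  have finU : volume (A ∪ B) ≠ ⊤ := hfin _ (Set.union_subset hAc hBc)
  have finCU : volume (unitCube d \ (A ∪ B)) ≠ ⊤ := hfin _ Set.diff_subset
  have finCA : volume (unitCube d \ A) ≠ ⊤ := hfin _ Set.diff_subset
  set a := (volume (A \ B)).toReal with hadef
  set b := (volume (B \ A)).toReal with hbdef
  set i := (volume (A ∩ B)).toReal with hidef
  set c := (volume ((unitCube d \ A) ∩ (unitCube d \ B))).toReal with hcdef
  have ha : 0 ≤ a := ENNReal.toReal_nonneg
  have hb : 0 ≤ b := ENNReal.toReal_nonneg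
  have hi : 0 ≤ i := ENNReal.toReal_nonneg
  -- volume A = i + a
  have e1 : (volume A).toReal = i + a := by
    rw [← measure_inter_add_diff A hBm, ENNReal.toReal_add finAB finAdB]
  -- volume B = i + b
  have e2 : (volume B).toReal = i + b := by
    rw [← measure_inter_add_diff B hAm, ENNReal.toReal_add (by rwa [Set.inter_comm]) finBdA,
      Set.inter_comm]
  -- symmDiff
  have e3 : (volume (symmDiff A B)).toReal = a + b := by
    rw [Set.symmDiff_def, measure_union (disjoint_sdiff_sdiff) (hBm.diff hAm),
      ENNReal.toReal_add finAdB finBdA]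
  -- union
  have e4 : (volume (A ∪ B)).toReal = a + (i + b) := by
    rw [← Set.diff_union_self, measure_union disjoint_sdiff_self_left hBm,
      ENNReal.toReal_add finAdB finB, e2]
  -- complement intersection
  have e5 : c = 1 - (a + (i + b)) := by
    have hds : (unitCube d \ A) ∩ (unitCube d \ B) = unitCube d \ (A ∪ B) :=
      Set.diff_inter_diff
    have h := measure_inter_add_diff (μ := volume) (unitCube d) (hAm.union hBm)
    rw [Set.inter_eq_self_of_subset_right (Set.union_subset hAc hBc), hcube] at h
    have h' : (volume (A ∪ B)).toReal + (volume (unitCube d \ (A ∪ B))).toReal = 1 := by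
      rw [← ENNReal.toReal_add finU finCU, h]; simp
    rw [hcdef, hds, ← e4]; linarith
  -- complement of A
  have e6 : (volume (unitCube d \ A)).toReal = 1 - (i + a) := by
    have h := measure_inter_add_diff (μ := volume) (unitCube d) hAm
    rw [Set.inter_eq_self_of_subset_right hAc, hcube] at h
    have h' : (volume A).toReal + (volume (unitCube d \ A)).toReal = 1 := by
      rw [← ENNReal.toReal_add (hfin _ hAc) finCA, h]; simp
    linarith [e1]
  have hvA1 : a + i ≤ 1 := by
    have : volume A ≤ 1 := hcube ▸ measure_mono hAc
    have := ENNReal.toReal_mono (by simp) this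
    simp at this
    linarith [e1]
  rw [e1, e6]
  have goal : (1 / (n : ℝ)) ^ d * κ / 2 ≤ a * i / (a + i) + b * c / (1 - a - i) :=
    stmt9_key a b i c _ κ ha hb hi hε hδκ hvA1 (e3 ▸ hsd) (by rw [e2] at hκB; linarith)
      (by rw [e2] at hκB'; linarith) (by rw [e4] at hun; linarith [e5])
      (by rw [e4] at hun; linarith [e5])
  calc (1 / (n : ℝ)) ^ d * κ / 2 ≤ a * i / (a + i) + b * c / (1 - a - i) := goal
    _ = a * i / (i + a) + b * c / (1 - (i + a)) := by ring_nf
end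
end
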